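/- arXiv:1402.2473 — 2 statements merged into one kernel-verified Lean document; each statement's English description precedes it below -/
import Mathlib

section
/- For the scalar ε-algorithm defined by ε_{-1}^{(n)} = 0, ε_0^{(n)} = S_n, and ε_{k+1}^{(n)} = ε_{k-1}^{(n+1)} + (ε_k^{(n+1)} - ε_k^{(n)})^{-1}, one has for all k and n (assuming all divisions are by nonzero quantities): ε_{2k+1}^{(n)} = Σ_{i=0}^{k} 1/(ε_{2i}^{(n+k-i+1)} - ε_{2i}^{(n+k-i)}). -/
/-- Wynn's scalar ε-algorithm (with shifted lower index: `eps K n = ε_{K-1}^{(n)}`).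
Then `ε_{2k+1}^{(n)} = ∑_{i=0}^{k} 1/Δε_{2i}^{(n+k-i)}`. -/
theorem eps_odd_sum (S : ℕ → ℂ) (eps : ℕ → ℕ → ℂ)
    (h0 : ∀ n, eps 0 n = 0)
    (h1 : ∀ n, eps 1 n = S n)
    (hrec : ∀ k n, eps (k+2) n = eps k (n+1) + (eps (k+1) (n+1) - eps (k+1) n)⁻¹)
    (hne : ∀ k n, eps (k+1) (n+1) - eps (k+1) n ≠ 0) :
    ∀ k n, eps (2*k+2) n
      = ∑ i ∈ Finset.range (k+1),
          (eps (2*i+1) ((n + (k - i)) + 1) - eps (2*i+1) (n + (k - i)))⁻¹ := by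
  intro k
  induction k with
  | zero =>
    intro n
    simp [hrec 0 n, h0]
  | succ k ih =>
    intro n
    have step : eps (2*(k+1)+2) n
        = eps (2*k+2) (n+1) + (eps (2*k+3) (n+1) - eps (2*k+3) n)⁻¹ := by
      have := hrec (2*k+2) n
      convert this using 3 <;> ring
    rw [step, ih (n+1)]
    conv_rhs => rw [Finset.sum_range_succ]
    congr 1
    · apply Finset.sum_congr rfl
      intro i hi
      have hik : i ≤ k := Nat.lt_succ_iff.mp (Finset.mem_range.mp hi)
      have : n + 1 + (k - i) = n + (k + 1 - i) := by omega
      rw [this]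
    · have : k + 1 - (k + 1) = 0 := by omega
      rw [this]
      norm_num [show 2*(k+1)+1 = 2*k+3 from by ring]
end

section
/- Suppose the scalar array ε satisfies the ε-algorithm recursion and e is a vector-valued array in ℝ^m satisfying the STEA1 rule e_{2k+2}^{(n)} = e_{2k}^{(n+1)} + ((ε_{2k+2}^{(n)} - ε_{2k}^{(n+1)})/(ε_{2k}^{(n+1)} - ε_{2k}^{(n)}))·(e_{2k}^{(n+1)} - e_{2k}^{(n)}), with initialization satisfying ⟨y, e_0^{(n)}⟩ = ε_0^{(n)} for all n, where y is a linear functional on ℝ^m. If additionally ⟨y, e_{2k}^{(n)}⟩ = ε_{2k}^{(n)} for all n, then ⟨y, e_{2k+2}^{(n)}⟩ = ε_{2k+2}^{(n)} for all n (assuming all denominators nonzero). Hence by induction ⟨y, e_{2k}^{(n)}⟩ = ε_{2k}^{(n)} for all k, n. -/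
/-- Consistency of STEA1 with the scalar ε-algorithm: taking the duality product
of `y` with the STEA1 rule recovers the scalar values `ε_{2k}^{(n)}`. -/
theorem stea1_consistency (m : ℕ) (seps : ℕ → ℕ → ℝ)
    (e : ℕ → ℕ → (Fin m → ℝ)) (y : (Fin m → ℝ) →ₗ[ℝ] ℝ)
    (hrec : ∀ j n, seps (j+2) n = seps j (n+1) + (seps (j+1) (n+1) - seps (j+1) n)⁻¹)
    (hden : ∀ k n, seps (2*k) (n+1) - seps (2*k) n ≠ 0)
    (hodd : ∀ k n, seps (2*k+1) (n+1) - seps (2*k+1) n ≠ 0)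
    (hstea : ∀ k n, e (2*k+2) n = e (2*k) (n+1) +
      ((seps (2*k+2) n - seps (2*k) (n+1)) / (seps (2*k) (n+1) - seps (2*k) n))
        • (e (2*k) (n+1) - e (2*k) n))
    (hy0 : ∀ n, y (e 0 n) = seps 0 n) :
    (∀ k, (∀ n, y (e (2*k) n) = seps (2*k) n) →
      ∀ n, y (e (2*k+2) n) = seps (2*k+2) n) ∧
    (∀ k n, y (e (2*k) n) = seps (2*k) n) := by
  have step : ∀ k, (∀ n, y (e (2*k) n) = seps (2*k) n) →
      ∀ n, y (e (2*k+2) n) = seps (2*k+2) n := by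
    intro k ih n
    rw [hstea k n, map_add, map_smul, map_sub, ih, ih, smul_eq_mul,
      div_mul_cancel₀ _ (hden k n)]
    ring
  refine ⟨step, ?_⟩
  intro k
  induction k with
  | zero => simpa using hy0
  | succ k ih =>
    have := step k ih
    intro n
    have h : 2*(k+1) = 2*k+2 := by ring
    rw [h]
    exact this n
end
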